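/- arXiv:1312.2206 — 2 statements merged into one kernel-verified Lean document; each statement's English description precedes it below -/
import Mathlib

section
/- (Theorem 1, part 2 — attainment for small q.) Fix b ∈ (0, 1/√e) and set k = K₁(b) = -b(b²e - 2)/(2(b²e - 1)) and c = b²/(2(b²e - 1)). Then the function λ(σ) = -k - √(2cσ + k²) is admissible on [0,1] (λ(0) = 0, λ'(σ) ≥ 0, λ(σ)λ'(σ) ≤ 1), and its functional values are I[λ] = q₁(b) = (1/2)[b² + k·b - k² log((b+k)/k)] and J[λ] = J_max(b) = √2 (k log((b+k)/k) + b). -/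
open MeasureTheory Real

/-- The functional `I[λ] = -∫₀¹ λλ' log(λλ') dσ`. -/
noncomputable def lamLift (lam : ℝ → ℝ) : ℝ :=
  -∫ σ in (0:ℝ)..1, lam σ * deriv lam σ * Real.log (lam σ * deriv lam σ)

/-- The functional `J[λ] = -√2 ∫₀¹ λ' log(λλ') dσ`. -/
noncomputable def lamDrag (lam : ℝ → ℝ) : ℝ :=
  -Real.sqrt 2 * ∫ σ in (0:ℝ)..1, deriv lam σ * Real.log (lam σ * deriv lam σ)

/-!
Write `t(σ) = √(2cσ + k²)`, so that `λ = -k - t` and `λ' = -c/t`. Then `λλ' = c(k + t)/t`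
increases along `[0, 1]`, and for the given `k, c` it reaches exactly `1/e` at `σ = 1`; this is
the Brillouin condition. Both integrands have the form `g(t) t'`, so they have explicit
antiderivatives in `t`. The Brillouin condition makes them nonpositive, hence integrable despite
the logarithmic singularity at `σ = 0`, and the fundamental theorem of calculus evaluates the
functionals between `t(0) = -k` and `t(1) = -(b + k)`.
-/

open Set

theorem intervalIntegral.integral_eq_sub_of_hasDerivAt_of_nonpos {f f' : ℝ → ℝ} {a b : ℝ}
    (hab : a ≤ b) (hcont : ContinuousOn f (Icc a b))
    (hderiv : ∀ x ∈ Ioo a b, HasDerivAt f (f' x) x) (hf' : ∀ x ∈ Ioo a b, f' x ≤ 0) :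
    ∫ x in a..b, f' x = f b - f a := by
  have hint : IntervalIntegrable (-f') volume a b := by
    refine intervalIntegrable_deriv_of_nonneg (g := -f) ?_ ?_ ?_
    · rw [uIcc_of_le hab]; exact hcont.neg
    · rw [min_eq_left hab, max_eq_right hab]; exact fun x hx => (hderiv x hx).neg
    · rw [min_eq_left hab, max_eq_right hab]; exact fun x hx => neg_nonneg.2 (hf' x hx)
  exact intervalIntegral.integral_eq_sub_of_hasDerivAt_of_le hab hcont hderiv
    (neg_neg f' ▸ hint.neg)

theorem log_mul_div_eq {c u t : ℝ} (hc : c ≠ 0) (hu : u ≠ 0) (ht : t ≠ 0) :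
    log (c * u / t) = log c + log u - log t := by
  rw [log_div (mul_ne_zero hc hu) ht, log_mul hc hu]

/-- Since `Real.log` is even, the logarithms here need no sign bookkeeping: in the application
`c < 0` and `k + t < 0`. -/
noncomputable def liftPotential (k c t : ℝ) : ℝ :=
  (k + t) ^ 2 / 2 * (log c + log (k + t)) - (k + t) ^ 2 / 4
    - (t ^ 2 / 2 + k * t) * log t + t ^ 2 / 4 + k * t

noncomputable def dragPotential (k c t : ℝ) : ℝ :=
  t * log c + (k + t) * log (k + t) - t * log t

section Potentials

variable {k c : ℝ}

theorem continuous_liftPotential : Continuous (liftPotential k c) := by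
  have hu : Continuous fun t => (k + t) * log (k + t) :=
    continuous_mul_log.comp (continuous_const_add k)
  have ht : Continuous fun t : ℝ => t * log t := continuous_mul_log
  have : liftPotential k c = fun t => (k + t) ^ 2 / 2 * log c
      + (k + t) / 2 * ((k + t) * log (k + t)) - (k + t) ^ 2 / 4
      - (t / 2 + k) * (t * log t) + t ^ 2 / 4 + k * t := by
    funext t; simp only [liftPotential]; ring
  rw [this]
  fun_prop

theorem continuous_dragPotential : Continuous (dragPotential k c) := by
  have hu : Continuous fun t => (k + t) * log (k + t) :=
    continuous_mul_log.comp (continuous_const_add k)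
  unfold dragPotential
  fun_prop

theorem hasDerivAt_liftPotential {t : ℝ} (hc : c ≠ 0) (ht : t ≠ 0) (hkt : k + t ≠ 0) :
    HasDerivAt (liftPotential k c) ((k + t) * log (c * (k + t) / t)) t := by
  have hu : HasDerivAt (fun t => k + t) 1 t := (hasDerivAt_id t).const_add k
  have hlogu := hu.log hkt
  have hlogt := hasDerivAt_log ht
  have H := (((((hu.pow 2).div_const 2).mul ((hasDerivAt_const t (log c)).add hlogu)).sub
    ((hu.pow 2).div_const 4)).sub ((((hasDerivAt_pow 2 t).div_const 2).add
    ((hasDerivAt_id t).const_mul k)).mul hlogt)).add ((hasDerivAt_pow 2 t).div_const 4) |>.add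
    ((hasDerivAt_id t).const_mul k)
  refine H.congr_deriv ?_
  simp only [Pi.add_apply, Pi.pow_apply, id]
  rw [log_mul_div_eq hc hkt ht]
  field_simp
  ring

theorem hasDerivAt_dragPotential {t : ℝ} (hc : c ≠ 0) (ht : t ≠ 0) (hkt : k + t ≠ 0) :
    HasDerivAt (dragPotential k c) (log (c * (k + t) / t)) t := by
  have hu : HasDerivAt (fun t => k + t) 1 t := (hasDerivAt_id t).const_add k
  have H := (((hasDerivAt_id t).mul_const (log c)).add (hu.mul (hu.log hkt))).sub
    ((hasDerivAt_id t).mul (hasDerivAt_log ht))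
  refine H.congr_deriv ?_
  simp only [id]
  rw [log_mul_div_eq hc hkt ht]
  field_simp
  ring

end Potentials

noncomputable def profileRoot (k c σ : ℝ) : ℝ := √(2 * c * σ + k ^ 2)

noncomputable def profile (k c σ : ℝ) : ℝ := -k - profileRoot k c σ

section Profile

variable {k c σ : ℝ}

theorem profileRoot_zero (hk : k ≤ 0) : profileRoot k c 0 = -k := by
  rw [profileRoot, mul_zero, zero_add, sqrt_sq_eq_abs, abs_of_nonpos hk]

theorem profile_zero (hk : k ≤ 0) : profile k c 0 = 0 := by
  rw [profile, profileRoot_zero hk, sub_self]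

theorem profile_radicand_pos (hc : c ≤ 0) (h1 : 0 < 2 * c + k ^ 2) (hσ : σ ≤ 1) :
    0 < 2 * c * σ + k ^ 2 := by
  nlinarith

theorem continuous_profileRoot : Continuous (profileRoot k c) := by
  unfold profileRoot
  fun_prop

theorem profileRoot_pos (h : 0 < 2 * c * σ + k ^ 2) : 0 < profileRoot k c σ :=
  sqrt_pos.2 h

theorem profileRoot_antitone (hc : c ≤ 0) : Antitone (profileRoot k c) :=
  fun _ _ hστ => sqrt_le_sqrt (by nlinarith)

theorem profile_pos (hk : k ≤ 0) (hc : c < 0) (hσ : 0 < σ) (h : 0 ≤ 2 * c * σ + k ^ 2) :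
    0 < profile k c σ := by
  have : profileRoot k c σ < profileRoot k c 0 :=
    sqrt_lt_sqrt h (by nlinarith)
  rw [profileRoot_zero hk] at this
  rw [profile]
  linarith

theorem hasDerivAt_profileRoot (h : 0 < 2 * c * σ + k ^ 2) :
    HasDerivAt (profileRoot k c) (c / profileRoot k c σ) σ := by
  refine (((hasDerivAt_id σ).const_mul (2 * c)).add_const (k ^ 2)).sqrt h.ne' |>.congr_deriv ?_
  have := (profileRoot_pos h).ne'
  rw [profileRoot] at this ⊢
  field_simp
  exact mul_div_cancel_right₀ c this

theorem hasDerivAt_profile (h : 0 < 2 * c * σ + k ^ 2) :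
    HasDerivAt (profile k c) (-c / profileRoot k c σ) σ :=
  ((hasDerivAt_profileRoot h).const_sub (-k)).congr_deriv (neg_div _ _).symm

theorem deriv_profile (h : 0 < 2 * c * σ + k ^ 2) :
    deriv (profile k c) σ = -c / profileRoot k c σ :=
  (hasDerivAt_profile h).deriv

theorem deriv_profile_pos (hc : c < 0) (h : 0 < 2 * c * σ + k ^ 2) :
    0 < deriv (profile k c) σ := by
  rw [deriv_profile h]
  exact div_pos (neg_pos.2 hc) (profileRoot_pos h)

theorem profile_mul_deriv_le (hk : k ≤ 0) (hc : c ≤ 0) (h1 : 0 < 2 * c + k ^ 2) (hσ : σ ≤ 1) :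
    profile k c σ * deriv (profile k c) σ ≤ profile k c 1 * deriv (profile k c) 1 := by
  have key : ∀ τ ≤ 1, profile k c τ * deriv (profile k c) τ = c * k / profileRoot k c τ + c := by
    intro τ hτ
    have hr := profile_radicand_pos hc h1 hτ
    rw [deriv_profile hr, profile]
    field_simp [(profileRoot_pos hr).ne']
    ring
  rw [key σ hσ, key 1 le_rfl]
  gcongr ?_ + c
  exact div_le_div_of_nonneg_left (by nlinarith)
    (profileRoot_pos (profile_radicand_pos hc h1 le_rfl)) (profileRoot_antitone hc hσ)

end Profile

section Functionals

variable {k c : ℝ}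

theorem profileRoot_add_ne_zero {σ : ℝ} (hk : k ≤ 0) (hc : c < 0) (hσ : 0 < σ)
    (h : 0 ≤ 2 * c * σ + k ^ 2) : k + profileRoot k c σ ≠ 0 := by
  have := profile_pos hk hc hσ h
  rw [profile] at this
  linarith

theorem profile_mul_deriv_eq {σ : ℝ} (h : 0 < 2 * c * σ + k ^ 2) :
    profile k c σ * deriv (profile k c) σ = c * (k + profileRoot k c σ) / profileRoot k c σ := by
  rw [deriv_profile h, profile]
  ring

theorem lamLift_profile (hk : k ≤ 0) (hc : c < 0) (h1 : 0 < 2 * c + k ^ 2)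
    (hbrill : ∀ σ ∈ Icc (0 : ℝ) 1, profile k c σ * deriv (profile k c) σ ≤ 1) :
    lamLift (profile k c) = liftPotential k c (-k) - liftPotential k c (profileRoot k c 1) := by
  have hderiv : ∀ σ ∈ Ioo (0 : ℝ) 1,
      HasDerivAt (fun σ => liftPotential k c (profileRoot k c σ))
        (profile k c σ * deriv (profile k c) σ
          * log (profile k c σ * deriv (profile k c) σ)) σ := by
    intro σ hσ
    have hr := profile_radicand_pos hc.le h1 hσ.2.le
    refine ((hasDerivAt_liftPotential hc.ne (profileRoot_pos hr).ne'
      (profileRoot_add_ne_zero hk hc hσ.1 hr.le)).comp σ (hasDerivAt_profileRoot hr)).congr_deriv ?_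
    rw [profile_mul_deriv_eq hr]
    ring
  have hnonpos : ∀ σ ∈ Ioo (0 : ℝ) 1,
      profile k c σ * deriv (profile k c) σ * log (profile k c σ * deriv (profile k c) σ) ≤ 0 := by
    intro σ hσ
    have hr := profile_radicand_pos hc.le h1 hσ.2.le
    exact mul_log_nonpos (mul_pos (profile_pos hk hc hσ.1 hr.le) (deriv_profile_pos hc hr)).le
      (hbrill σ (Ioo_subset_Icc_self hσ))
  rw [lamLift, intervalIntegral.integral_eq_sub_of_hasDerivAt_of_nonpos
    (f := fun σ => liftPotential k c (profileRoot k c σ)) zero_le_one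
    (continuous_liftPotential.comp continuous_profileRoot).continuousOn hderiv hnonpos,
    profileRoot_zero hk]
  ring

theorem lamDrag_profile (hk : k ≤ 0) (hc : c < 0) (h1 : 0 < 2 * c + k ^ 2)
    (hbrill : ∀ σ ∈ Icc (0 : ℝ) 1, profile k c σ * deriv (profile k c) σ ≤ 1) :
    lamDrag (profile k c)
      = √2 * (dragPotential k c (profileRoot k c 1) - dragPotential k c (-k)) := by
  have hderiv : ∀ σ ∈ Ioo (0 : ℝ) 1,
      HasDerivAt (fun σ => -dragPotential k c (profileRoot k c σ))
        (deriv (profile k c) σ * log (profile k c σ * deriv (profile k c) σ)) σ := by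
    intro σ hσ
    have hr := profile_radicand_pos hc.le h1 hσ.2.le
    refine ((hasDerivAt_dragPotential hc.ne (profileRoot_pos hr).ne'
      (profileRoot_add_ne_zero hk hc hσ.1 hr.le)).comp σ
      (hasDerivAt_profileRoot hr)).neg.congr_deriv ?_
    rw [profile_mul_deriv_eq hr, deriv_profile hr]
    ring
  have hnonpos : ∀ σ ∈ Ioo (0 : ℝ) 1,
      deriv (profile k c) σ * log (profile k c σ * deriv (profile k c) σ) ≤ 0 := by
    intro σ hσ
    have hr := profile_radicand_pos hc.le h1 hσ.2.le
    have hderiv_pos := deriv_profile_pos hc hr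
    exact mul_nonpos_of_nonneg_of_nonpos hderiv_pos.le (log_nonpos
      (mul_pos (profile_pos hk hc hσ.1 hr.le) hderiv_pos).le (hbrill σ (Ioo_subset_Icc_self hσ)))
  rw [lamDrag, intervalIntegral.integral_eq_sub_of_hasDerivAt_of_nonpos
    (f := fun σ => -dragPotential k c (profileRoot k c σ)) zero_le_one
    (continuous_dragPotential.comp continuous_profileRoot).neg.continuousOn hderiv hnonpos,
    profileRoot_zero hk]
  ring

end Functionals

section SmallQ

variable {b k c : ℝ}

theorem sq_mul_exp_one_lt_one (hb : b ∈ Ioo (0 : ℝ) (1 / √(exp 1))) : b ^ 2 * exp 1 < 1 := by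
  have hsqrt : 0 < √(exp 1) := sqrt_pos.2 (exp_pos 1)
  have h : b * √(exp 1) < 1 := (lt_div_iff₀ hsqrt).1 hb.2
  have := pow_lt_one₀ (mul_pos hb.1 hsqrt).le h two_ne_zero
  rwa [mul_pow, sq_sqrt (exp_pos 1).le] at this

theorem small_q_parameters (hb : 0 < b) (hbe : b ^ 2 * exp 1 < 1)
    (hk : k = -(b * (b ^ 2 * exp 1 - 2)) / (2 * (b ^ 2 * exp 1 - 1)))
    (hc : c = b ^ 2 / (2 * (b ^ 2 * exp 1 - 1))) :
    b + k < 0 ∧ c < 0 ∧ 2 * c + k ^ 2 = (b + k) ^ 2 ∧ c * b * exp 1 = b + k := by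
  have hden : 2 * (b ^ 2 * exp 1 - 1) < 0 := by linarith
  have hden' : b ^ 2 * exp 1 - 1 ≠ 0 := by linarith
  have hbk : b + k = b ^ 3 * exp 1 / (2 * (b ^ 2 * exp 1 - 1)) := by
    rw [hk]
    field_simp
    ring
  refine ⟨?_, ?_, ?_, ?_⟩
  · rw [hbk]
    exact div_neg_of_pos_of_neg (by positivity) hden
  · rw [hc]
    exact div_neg_of_pos_of_neg (by positivity) hden
  · rw [hbk, hk, hc]
    field_simp
    ring
  · rw [hbk, hc]
    field_simp

theorem log_eq_of_mul_mul_exp_one_eq {x : ℝ} (hb : b ≠ 0) (hx : x ≠ 0) (h : c * b * exp 1 = x) :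
    log c = log x - log b - 1 := by
  have hc : c ≠ 0 := by
    rintro rfl
    simp [eq_comm, hx] at h
  rw [← h, log_mul (mul_ne_zero hc hb) (exp_ne_zero 1), log_mul hc hb, log_exp]
  ring

theorem liftPotential_sub_eq (hb : b ≠ 0) (hk : k ≠ 0) (hbk : b + k ≠ 0)
    (hcbe : c * b * exp 1 = b + k) :
    liftPotential k c (-k) - liftPotential k c (-(b + k))
      = 1 / 2 * (b ^ 2 + k * b - k ^ 2 * log ((b + k) / k)) := by
  rw [liftPotential, liftPotential, show k + -(b + k) = -b by ring, add_neg_cancel,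
    log_eq_of_mul_mul_exp_one_eq hb hbk hcbe, log_div hbk hk]
  simp only [log_neg_eq_log, log_zero]
  ring

theorem dragPotential_sub_eq (hb : b ≠ 0) (hk : k ≠ 0) (hbk : b + k ≠ 0)
    (hcbe : c * b * exp 1 = b + k) :
    dragPotential k c (-(b + k)) - dragPotential k c (-k) = k * log ((b + k) / k) + b := by
  rw [dragPotential, dragPotential, show k + -(b + k) = -b by ring, add_neg_cancel,
    log_eq_of_mul_mul_exp_one_eq hb hbk hcbe, log_div hbk hk]
  simp only [log_neg_eq_log, log_zero]
  ring

end SmallQ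

/-- Theorem 1, part 2 (attainment for small `q`): for `b ∈ (0, 1/√e)`,
with `k = K₁(b)` and `c` as in the paper, the function
`λ(σ) = -k - √(2cσ + k²)` is admissible and satisfies `I[λ] = q₁(b)`,
`J[λ] = J_max(b)`. -/
theorem maximizer_small_q
    (b : ℝ) (hb : b ∈ Set.Ioo (0:ℝ) (1 / Real.sqrt (Real.exp 1)))
    (k c : ℝ)
    (hk : k = -(b * (b ^ 2 * Real.exp 1 - 2)) / (2 * (b ^ 2 * Real.exp 1 - 1)))
    (hc : c = b ^ 2 / (2 * (b ^ 2 * Real.exp 1 - 1)))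
    (lam : ℝ → ℝ)
    (hlam : ∀ σ, lam σ = -k - Real.sqrt (2 * c * σ + k ^ 2)) :
    lam 0 = 0 ∧
    (∀ σ ∈ Set.Icc (0:ℝ) 1, 0 ≤ deriv lam σ ∧ lam σ * deriv lam σ ≤ 1) ∧
    lamLift lam = (1 / 2) * (b ^ 2 + k * b - k ^ 2 * Real.log ((b + k) / k)) ∧
    lamDrag lam = Real.sqrt 2 * (k * Real.log ((b + k) / k) + b) := by
  obtain ⟨hbk, hc0, hroot, hcbe⟩ := small_q_parameters hb.1 (sq_mul_exp_one_lt_one hb) hk hc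
  have hk0 : k < 0 := by linarith [hb.1]
  have h1 : 0 < 2 * c + k ^ 2 := by rw [hroot]; nlinarith
  have hroot1 : profileRoot k c 1 = -(b + k) := by
    rw [profileRoot, mul_one, hroot, sqrt_sq_eq_abs, abs_of_neg hbk]
  have hbrill : ∀ σ ∈ Icc (0 : ℝ) 1, profile k c σ * deriv (profile k c) σ ≤ 1 := by
    intro σ hσ
    calc profile k c σ * deriv (profile k c) σ
        ≤ profile k c 1 * deriv (profile k c) 1 := profile_mul_deriv_le hk0.le hc0.le h1 hσ.2
      _ = exp (-1) := by
        rw [deriv_profile (profile_radicand_pos hc0.le h1 le_rfl), profile, hroot1,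
          show -k - -(b + k) = b by ring, neg_div_neg_eq, exp_neg, ← hcbe]
        field_simp [hc0.ne, hb.1.ne']
      _ ≤ 1 := exp_le_one_iff.2 (by norm_num)
  obtain rfl : lam = profile k c := funext hlam
  refine ⟨profile_zero hk0.le, fun σ hσ => ⟨?_, hbrill σ hσ⟩, ?_, ?_⟩
  · exact (deriv_profile_pos hc0 (profile_radicand_pos hc0.le h1 hσ.2)).le
  · rw [lamLift_profile hk0.le hc0 h1 hbrill, hroot1]
    exact liftPotential_sub_eq hb.1.ne' hk0.ne hbk.ne hcbe
  · rw [lamDrag_profile hk0.le hc0 h1 hbrill, hroot1]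
    exact congrArg _ (dragPotential_sub_eq hb.1.ne' hk0.ne hbk.ne hcbe)
end

section
/- (Consistency of the piecewise minimizer.) Fix b ∈ (√(2/e), √2) and set k = K(b) = -(e-1)b(b²e - 2)/(2 + (e-2)b²e), a = (b²e - 2)/((e-1)b), c = (2 - b²)/(2 + (e-2)b²e), γ = a²/2, and λ(σ) = √(2σ) for 0 ≤ σ < γ, λ(σ) = -k + √(2c(σ - γ) + (a+k)²) for γ ≤ σ ≤ 1. Then: (i) λ is continuous at σ = γ, with λ(γ) = a; (ii) λ(1) = b, i.e. -k + √(2c(1 - γ) + (a+k)²) = b; and (iii) the transversality condition λ(1)·λ'(1) = 1/e holds, i.e. b·c/(b + k) = 1/e. -/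
/-!
With `D = 2 + (e - 2) b² e`, the parameters satisfy `a + k = (b²e - 2)(2 - b²) / ((e - 1) b D)`
and `b + k = b e (2 - b²) / D`; for `b ∈ (√(2/e), √2)` both are positive, so the square root in
the second branch of `λ` collapses at `σ = γ` and at `σ = 1`. Everything then reduces to the
rational identities `2c(1 - γ) + (a + k)² = (b + k)²` and `c / (b + k) = 1 / (b e)`, which hold
for any value of `e`.
-/

open Real

theorem continuous_if_lt_const {α β : Type*} [TopologicalSpace α] [LinearOrder α]
    [OrderClosedTopology α] [TopologicalSpace β] {f g : α → β} {x₀ : α}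
    (hf : Continuous f) (hg : Continuous g) (hfg : f x₀ = g x₀) :
    Continuous fun x => if x < x₀ then f x else g x := by
  have h := hg.if_le hf continuous_const continuous_id fun x (hx : x₀ = x) => hx ▸ hfg.symm
  convert h using 2 with x
  simp only [id, ← not_lt]
  split_ifs <;> rfl

theorem neg_add_sqrt_add_sq {x k : ℝ} (h : 0 ≤ x + k) : -k + √((x + k) ^ 2) = x := by
  rw [sqrt_sq h]; ring

theorem sqrt_two_mul_sq_div_two {a : ℝ} (ha : 0 ≤ a) : √(2 * (a ^ 2 / 2)) = a := by
  rw [mul_div_cancel₀ _ two_ne_zero, sqrt_sq ha]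

noncomputable section

namespace Cavitation

variable (E b : ℝ)

def denom : ℝ := 2 + (E - 2) * b ^ 2 * E

def k : ℝ := -((E - 1) * b * (b ^ 2 * E - 2)) / denom E b

def a : ℝ := (b ^ 2 * E - 2) / ((E - 1) * b)

def c : ℝ := (2 - b ^ 2) / denom E b

variable {E b}

theorem denom_pos (hE : 1 < E) (hbE : 2 < b ^ 2 * E) (hb2 : b ^ 2 < 2) : 0 < denom E b := by
  have hx : 0 < 2 * E - b ^ 2 * E := by nlinarith
  rcases le_or_gt 2 E with h2E | h2E
  · have : 0 ≤ (E - 2) * (b ^ 2 * E) := mul_nonneg (by linarith) (by linarith)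
    unfold denom; linarith
  · -- `denom E b = 2 (E - 1)^2 + (2 - E) (2E - b^2 E)`
    have : 0 < (2 - E) * (2 * E - b ^ 2 * E) := mul_pos (by linarith) hx
    unfold denom; nlinarith

theorem b_add_k (hD : denom E b ≠ 0) : b + k E b = b * E * (2 - b ^ 2) / denom E b := by
  rw [k, eq_div_iff hD, add_mul, div_mul_cancel₀ _ hD, denom]; ring

theorem a_add_k (hD : denom E b ≠ 0) (hE : E ≠ 1) (hb : b ≠ 0) :
    a E b + k E b = (b ^ 2 * E - 2) * (2 - b ^ 2) / ((E - 1) * b * denom E b) := by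
  have : E - 1 ≠ 0 := sub_ne_zero.2 hE
  unfold a k
  field_simp
  unfold denom; ring

theorem two_mul_c_mul_one_sub_add_sq (hD : denom E b ≠ 0) (hE : E ≠ 1) (hb : b ≠ 0) :
    2 * c E b * (1 - a E b ^ 2 / 2) + (a E b + k E b) ^ 2 = (b + k E b) ^ 2 := by
  have : E - 1 ≠ 0 := sub_ne_zero.2 hE
  rw [a_add_k hD hE hb, b_add_k hD, c, a]
  field_simp
  unfold denom; ring

theorem b_mul_c_div_b_add_k (hD : denom E b ≠ 0) (hE : E ≠ 0) (hb : b ≠ 0) (hb2 : b ^ 2 ≠ 2) :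
    b * c E b / (b + k E b) = 1 / E := by
  have : 2 - b ^ 2 ≠ 0 := sub_ne_zero.2 (Ne.symm hb2)
  rw [b_add_k hD, c]
  field_simp

theorem a_pos (hE : 1 < E) (hb : 0 < b) (hbE : 2 < b ^ 2 * E) : 0 < a E b :=
  div_pos (sub_pos.2 hbE) (mul_pos (sub_pos.2 hE) hb)

theorem a_lt (hE : 1 < E) (hb : 0 < b) (hb2 : b ^ 2 < 2) : a E b < b := by
  rw [a, div_lt_iff₀ (mul_pos (sub_pos.2 hE) hb)]
  nlinarith

theorem a_add_k_pos (hE : 1 < E) (hb : 0 < b) (hbE : 2 < b ^ 2 * E) (hb2 : b ^ 2 < 2) :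
    0 < a E b + k E b := by
  have hD := denom_pos hE hbE hb2
  rw [a_add_k hD.ne' hE.ne' hb.ne']
  exact div_pos (mul_pos (sub_pos.2 hbE) (sub_pos.2 hb2))
    (mul_pos (mul_pos (sub_pos.2 hE) hb) hD)

theorem b_add_k_pos (hE : 1 < E) (hb : 0 < b) (hbE : 2 < b ^ 2 * E) (hb2 : b ^ 2 < 2) :
    0 < b + k E b := by
  have hD := denom_pos hE hbE hb2
  rw [b_add_k hD.ne']
  exact div_pos (mul_pos (mul_pos hb (by linarith)) (sub_pos.2 hb2)) hD

end Cavitation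

end

/-- Consistency of the piecewise minimizer of Theorem 1, part 1: for
`b ∈ (√(2/e), √2)` and `k, a, c, γ` as in the paper, the piecewise function
`λ` is continuous at `γ` with `λ(γ) = a`, satisfies `λ(1) = b`, and the
transversality condition `λ(1) λ'(1) = 1/e`, i.e. `b·c/(b + k) = 1/e`, holds. -/
theorem piecewise_minimizer_consistency
    (b : ℝ) (hb : b ∈ Set.Ioo (Real.sqrt (2 / Real.exp 1)) (Real.sqrt 2))
    (k a c γ : ℝ)
    (hk : k = -((Real.exp 1 - 1) * b * (b ^ 2 * Real.exp 1 - 2)) /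
      (2 + (Real.exp 1 - 2) * b ^ 2 * Real.exp 1))
    (ha : a = (b ^ 2 * Real.exp 1 - 2) / ((Real.exp 1 - 1) * b))
    (hc : c = (2 - b ^ 2) / (2 + (Real.exp 1 - 2) * b ^ 2 * Real.exp 1))
    (hγ : γ = a ^ 2 / 2)
    (lam : ℝ → ℝ)
    (hlam : ∀ σ, lam σ = if σ < γ then Real.sqrt (2 * σ)
      else -k + Real.sqrt (2 * c * (σ - γ) + (a + k) ^ 2)) :
    ContinuousAt lam γ ∧
    lam γ = a ∧
    Real.sqrt (2 * γ) = a ∧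
    lam 1 = b ∧
    -k + Real.sqrt (2 * c * (1 - γ) + (a + k) ^ 2) = b ∧
    b * c / (b + k) = 1 / Real.exp 1 := by
  have he : 1 < exp 1 := one_lt_exp_iff.2 one_pos
  have hb₀ : 0 < b := (sqrt_nonneg _).trans_lt hb.1
  have hbe : 2 < b ^ 2 * exp 1 := (div_lt_iff₀ (exp_pos 1)).1 ((sqrt_lt' hb₀).1 hb.1)
  have hb2 : b ^ 2 < 2 := (lt_sqrt hb₀.le).1 hb.2
  replace hk : k = Cavitation.k (exp 1) b := hk
  replace ha : a = Cavitation.a (exp 1) b := ha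
  replace hc : c = Cavitation.c (exp 1) b := hc
  have hD := (Cavitation.denom_pos he hbe hb2).ne'
  have ha₀ : 0 < a := ha ▸ Cavitation.a_pos he hb₀ hbe
  have hak : 0 < a + k := ha ▸ hk ▸ Cavitation.a_add_k_pos he hb₀ hbe hb2
  have hbk : 0 < b + k := hk ▸ Cavitation.b_add_k_pos he hb₀ hbe hb2
  have hγ₁ : γ < 1 := by
    nlinarith [ha ▸ Cavitation.a_lt he hb₀ hb2]
  have hsqrtγ : √(2 * γ) = a := hγ ▸ sqrt_two_mul_sq_div_two ha₀.le
  have hat : -k + √(2 * c * (γ - γ) + (a + k) ^ 2) = a := by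
    rw [sub_self, mul_zero, zero_add, neg_add_sqrt_add_sq hak.le]
  have hend : -k + √(2 * c * (1 - γ) + (a + k) ^ 2) = b := by
    rw [hγ, ha, hk, hc, Cavitation.two_mul_c_mul_one_sub_add_sq hD he.ne' hb₀.ne', ← hk,
      neg_add_sqrt_add_sq hbk.le]
  have hcont : Continuous lam := by
    rw [funext hlam]
    exact continuous_if_lt_const (by fun_prop) (by fun_prop) (hsqrtγ.trans hat.symm)
  refine ⟨hcont.continuousAt, ?_, hsqrtγ, ?_, hend, ?_⟩
  · rw [hlam, if_neg (lt_irrefl γ), hat]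
  · rw [hlam, if_neg hγ₁.not_gt, hend]
  · rw [hc, hk]
    exact Cavitation.b_mul_c_div_b_add_k hD (exp_pos 1).ne' hb₀.ne' hb2.ne
end
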